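/- arXiv:2204.06866 — 7 statements merged into one kernel-verified Lean document; each statement's English description precedes it below -/
import Mathlib

section
/- Let F be a finite set of non-constant irreducible integer polynomials with positive leading coefficient, let P be an infinite set of primes, let n > 1 be an integer, and let 0 = d₀ < d₁ < ... < d_l be integers. Then there exist natural numbers r, a and pairwise distinct primes p₀,...,p_l ∈ P such that, setting p = p₀⋯p_l, for every non-negative integer k and every i ∈ {0,...,l}: (1) x^n + k·p·x + a + dᵢ is irreducible over ℤ; (2) r^n + k·p·r + a + dᵢ is coprime to p; (3) f(r) is coprime to p for every f ∈ F. -/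
/-!
Pick `l + 1` primes `pᵢ ∈ P` larger than `B = (l + 1) n + ∑_{f ∈ F} deg f`. By the Chinese
remainder theorem choose `a ≡ pᵢ - dᵢ (mod pᵢ²)`: then `pᵢ` divides `a + dᵢ` exactly once, so
`xⁿ + k p x + a + dᵢ` is Eisenstein at `pᵢ`. The product `G` of the `xⁿ + a + dᵢ` and of the
members of `F` is primitive of degree at most `B < pⱼ`, so modulo each `pⱼ` it is a nonzero
polynomial with fewer roots than `ZMod pⱼ` has elements. Gluing non-roots by the Chinese
remainder theorem gives `r` with `G(r)` coprime to `p`, and `rⁿ + k p r + a + dᵢ ≡ rⁿ + a + dᵢ`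
modulo `p`.
-/

open Polynomial

theorem Set.Infinite.exists_injective_forall_mem_lt {S : Set ℕ} (hS : S.Infinite) (m B : ℕ) :
    ∃ f : Fin m → ℕ, Function.Injective f ∧ ∀ i, f i ∈ S ∧ B < f i := by
  let e := (hS.sdiff (Set.finite_Iic B)).natEmbedding
  refine ⟨fun i => e i, fun i j h => Fin.val_injective (e.injective (Subtype.ext h)), fun i => ?_⟩
  obtain ⟨hmem, hlt⟩ := (e i).2
  exact ⟨hmem, not_le.mp hlt⟩

theorem Int.exists_natCast_modEq_of_pairwise_coprime {ι : Type*} [Fintype ι] {m : ι → ℕ}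
    (hm : ∀ i, m i ≠ 0) (hcop : Pairwise (Function.onFun Nat.Coprime m)) (c : ι → ℤ) :
    ∃ w : ℕ, ∀ i, (w : ℤ) ≡ c i [ZMOD m i] := by
  classical
  let w := Nat.chineseRemainderOfFinset (fun i => (c i % m i).toNat) m Finset.univ
    (fun i _ => hm i) (fun i _ j _ hij => hcop hij)
  refine ⟨w, fun i => ?_⟩
  have hw : (w : ℤ) ≡ (c i % m i).toNat [ZMOD m i] :=
    (Int.natCast_modEq_iff).mpr (w.2 i (Finset.mem_univ i))
  rw [Int.toNat_of_nonneg (Int.emod_nonneg _ (by exact_mod_cast hm i))] at hw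
  exact hw.trans (Int.mod_modEq _ _)

theorem Polynomial.IsPrimitive.prod {R ι : Type*} [CommRing R] [IsDomain R]
    [NormalizedGCDMonoid R] {s : Finset ι} {f : ι → R[X]} (hf : ∀ i ∈ s, (f i).IsPrimitive) :
    (∏ i ∈ s, f i).IsPrimitive :=
  Finset.prod_induction _ _ (fun _ _ => IsPrimitive.mul) isPrimitive_one hf

theorem Polynomial.IsPrimitive.map_zmod_ne_zero {f : ℤ[X]} (hf : f.IsPrimitive) {q : ℕ}
    (hq : q ≠ 1) : f.map (Int.castRingHom (ZMod q)) ≠ 0 := by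
  intro h
  have hC : C (q : ℤ) ∣ f := (C_dvd_iff_dvd_coeff _ _).2 fun i =>
    (ZMod.intCast_zmod_eq_zero_iff_dvd _ _).1 (by simpa using congr(coeff $h i))
  exact hq (Nat.isUnit_iff.mp (Int.ofNat_isUnit.mp (hf _ hC)))

theorem Polynomial.IsPrimitive.exists_not_dvd_eval_of_natDegree_lt {f : ℤ[X]}
    (hf : f.IsPrimitive) {q : ℕ} (hq : q.Prime) (hdeg : f.natDegree < q) :
    ∃ r : ℤ, ¬ (q : ℤ) ∣ f.eval r := by
  have := Fact.mk hq
  have hcard : (f.map (Int.castRingHom (ZMod q))).natDegree < Cardinal.mk (ZMod q) := by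
    rw [Cardinal.mk_fintype, ZMod.card]
    exact_mod_cast natDegree_map_le.trans_lt hdeg
  obtain ⟨x, hx⟩ :=
    exists_eval_ne_zero_of_natDegree_lt_card _ (hf.map_zmod_ne_zero hq.ne_one) hcard
  obtain ⟨r, rfl⟩ := ZMod.intCast_surjective x
  refine ⟨r, fun h => hx ?_⟩
  rwa [eval_intCast_map, eq_intCast, ZMod.intCast_zmod_eq_zero_iff_dvd]

theorem Polynomial.irreducible_X_pow_add_C_mul_X_add_C {R : Type*} [CommRing R] [IsDomain R]
    {p : R} (hp : Prime p) {n : ℕ} (hn : 1 < n) {b c : R} (hb : p ∣ b) (hc : p ∣ c)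
    (hc2 : ¬ p ^ 2 ∣ c) : Irreducible (X ^ n + C b * X + C c) := by
  have hlin : (C b * X + C c).degree < (n : WithBot ℕ) :=
    degree_linear_le.trans_lt (WithBot.coe_lt_coe.mpr hn)
  have hmonic : (X ^ n + C b * X + C c).Monic := by
    rw [add_assoc]; exact monic_X_pow_add hlin
  have hdeg : (X ^ n + C b * X + C c).degree = (n : WithBot ℕ) := by
    rw [add_assoc, degree_add_eq_left_of_degree_lt (by rwa [degree_X_pow]), degree_X_pow]
  have hcoeff : ∀ m, (X ^ n + C b * X + C c).coeff m =
      if m = n then 1 else if m = 1 then b else if m = 0 then c else 0 := by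
    intro m
    simp only [coeff_add, coeff_X_pow, coeff_C_mul, coeff_X, coeff_C]
    split_ifs <;> first | (exfalso; omega) | simp
  refine irreducible_of_eisenstein_criterion
    ((Ideal.span_singleton_prime hp.ne_zero).mpr hp) ?_ ?_ ?_ ?_ hmonic.isPrimitive
  · rw [hmonic.leadingCoeff, Ideal.mem_span_singleton]
    exact hp.not_dvd_one
  · intro m hm
    rw [hdeg, Nat.cast_lt] at hm
    rw [Ideal.mem_span_singleton, hcoeff]
    split_ifs <;> first | (exfalso; omega) | assumption | exact dvd_zero p
  · rw [hdeg]; exact_mod_cast (by omega : 0 < n)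
  · rwa [hcoeff, if_neg (by omega), if_neg (by omega), if_pos rfl, Ideal.span_singleton_pow,
      Ideal.mem_span_singleton]

theorem exists_nat_dvd_add_and_not_sq_dvd_add {ι : Type*} [Fintype ι] {p : ι → ℕ}
    (hp : ∀ i, (p i).Prime) (hcop : Pairwise (Function.onFun Nat.Coprime p)) (d : ι → ℤ) :
    ∃ a : ℕ, ∀ i, (p i : ℤ) ∣ a + d i ∧ ¬ (p i : ℤ) ^ 2 ∣ a + d i := by
  obtain ⟨a, ha⟩ := Int.exists_natCast_modEq_of_pairwise_coprime
    (m := fun i => p i ^ 2) (fun i => pow_ne_zero _ (hp i).ne_zero)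
    (fun i j hij => Nat.Coprime.pow 2 2 (hcop hij)) (fun i => p i - d i)
  refine ⟨a, fun i => ?_⟩
  have hpi : Prime (p i : ℤ) := Nat.prime_iff_prime_int.mp (hp i)
  have hsq : (p i : ℤ) ^ 2 ∣ a + d i - p i := by
    have := (ha i).symm.dvd
    push_cast at this
    rwa [sub_sub_eq_add_sub] at this
  refine ⟨dvd_sub_self_right.mp ((dvd_pow_self _ two_ne_zero).trans hsq), fun h => ?_⟩
  have : (p i : ℤ) ^ 2 ∣ (p i : ℤ) ^ 1 := by simpa using (dvd_sub_right h).mp hsq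
  exact absurd ((pow_dvd_pow_iff hpi.ne_zero hpi.not_isUnit).mp this) (by norm_num)

theorem Polynomial.IsPrimitive.exists_nat_isCoprime_eval_prod {ι : Type*} [Fintype ι] {p : ι → ℕ}
    {f : ℤ[X]} (hf : f.IsPrimitive) (hp : ∀ i, (p i).Prime)
    (hcop : Pairwise (Function.onFun Nat.Coprime p)) (hdeg : ∀ i, f.natDegree < p i) :
    ∃ r : ℕ, IsCoprime (f.eval (r : ℤ)) (∏ i, (p i : ℤ)) := by
  choose s hs using fun i => hf.exists_not_dvd_eval_of_natDegree_lt (hp i) (hdeg i)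
  obtain ⟨r, hr⟩ := Int.exists_natCast_modEq_of_pairwise_coprime (fun i => (hp i).ne_zero) hcop s
  refine ⟨r, IsCoprime.prod_right fun i _ => ?_⟩
  refine ((Nat.prime_iff_prime_int.mp (hp i)).coprime_iff_not_dvd.mpr fun h => hs i ?_).symm
  -- `r ≡ s i [ZMOD p i]` forces `f.eval r ≡ f.eval (s i) [ZMOD p i]`
  exact (dvd_sub_right h).mp ((hr i).symm.dvd.trans (sub_dvd_eval_sub _ _ f))

theorem large_primes_progressions_general (F : Finset (Polynomial ℤ))
    (hF : ∀ f ∈ F, Irreducible f ∧ 1 ≤ f.natDegree ∧ 0 < f.leadingCoeff)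
    (P : Set ℕ) (hP : P.Infinite) (hPprime : ∀ q ∈ P, q.Prime)
    (n : ℕ) (hn : 1 < n) (l : ℕ) (d : Fin (l + 1) → ℤ) :
    ∃ (r a : ℕ) (ps : Fin (l + 1) → ℕ), Function.Injective ps ∧ (∀ i, ps i ∈ P) ∧
      ∀ (k : ℕ) (i : Fin (l + 1)),
        Irreducible (X ^ n + C ((k : ℤ) * ∏ j, (ps j : ℤ)) * X + C ((a : ℤ) + d i)) ∧
        IsCoprime ((r : ℤ) ^ n + (k : ℤ) * (∏ j, (ps j : ℤ)) * r + a + d i)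
          (∏ j, (ps j : ℤ)) ∧
        ∀ f ∈ F, IsCoprime (f.eval (r : ℤ)) (∏ j, (ps j : ℤ)) := by
  obtain ⟨ps, hinj, hps⟩ :=
    hP.exists_injective_forall_mem_lt (l + 1) ((l + 1) * n + ∑ f ∈ F, f.natDegree)
  have hprime : ∀ i, (ps i).Prime := fun i => hPprime _ (hps i).1
  have hcop : Pairwise (Function.onFun Nat.Coprime ps) := fun i j hij =>
    (Nat.coprime_primes (hprime i) (hprime j)).mpr (hinj.ne hij)
  obtain ⟨a, ha⟩ := exists_nat_dvd_add_and_not_sq_dvd_add hprime hcop d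
  set g : Fin (l + 1) → ℤ[X] := fun i => X ^ n + C ((a : ℤ) + d i) with hg
  have hprim : ((∏ i, g i) * ∏ f ∈ F, f).IsPrimitive :=
    (IsPrimitive.prod fun i _ => (monic_X_pow_add_C _ (by omega)).isPrimitive).mul
      (IsPrimitive.prod fun f hf =>
        (hF f hf).1.isPrimitive (Nat.one_le_iff_ne_zero.mp (hF f hf).2.1))
  have hdeg : ((∏ i, g i) * ∏ f ∈ F, f).natDegree ≤ (l + 1) * n + ∑ f ∈ F, f.natDegree := by
    refine natDegree_mul_le.trans (add_le_add ((natDegree_prod_le _ _).trans ?_)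
      (natDegree_prod_le _ _))
    simp only [hg, natDegree_X_pow_add_C, Finset.sum_const, Finset.card_univ, Fintype.card_fin,
      smul_eq_mul, le_refl]
  obtain ⟨r, hr⟩ :=
    hprim.exists_nat_isCoprime_eval_prod hprime hcop fun i => hdeg.trans_lt (hps i).2
  rw [eval_mul, eval_prod, eval_prod] at hr
  refine ⟨r, a, ps, hinj, fun i => (hps i).1, fun k i => ⟨?_, ?_,
    fun f hf => hr.of_mul_left_right.of_prod_left f hf⟩⟩
  · exact irreducible_X_pow_add_C_mul_X_add_C (Nat.prime_iff_prime_int.mp (hprime i)) hn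
      (dvd_mul_of_dvd_right (Finset.dvd_prod_of_mem _ (Finset.mem_univ i)) _) (ha i).1 (ha i).2
  · have hgi := hr.of_mul_left_left.of_prod_left i (Finset.mem_univ i)
    simp only [hg, eval_add, eval_pow, eval_X, eval_C] at hgi
    rw [show (r : ℤ) ^ n + k * (∏ j, (ps j : ℤ)) * r + a + d i
      = (r : ℤ) ^ n + (a + d i) + (∏ j, (ps j : ℤ)) * (k * r) by ring]
    exact hgi.add_mul_left_left _

theorem large_primes_progressions (F : Finset (Polynomial ℤ))
    (hF : ∀ f ∈ F, Irreducible f ∧ 1 ≤ f.natDegree ∧ 0 < f.leadingCoeff)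
    (P : Set ℕ) (hP : P.Infinite) (hPprime : ∀ q ∈ P, q.Prime)
    (n : ℕ) (hn : 1 < n) (l : ℕ) (d : Fin (l + 1) → ℤ)
    (hd0 : d 0 = 0) (hmono : StrictMono d) :
    ∃ (r a : ℕ) (ps : Fin (l + 1) → ℕ), Function.Injective ps ∧ (∀ i, ps i ∈ P) ∧
      ∀ (k : ℕ) (i : Fin (l + 1)),
        Irreducible (X ^ n + C ((k : ℤ) * ∏ j, (ps j : ℤ)) * X + C ((a : ℤ) + d i)) ∧
        IsCoprime ((r : ℤ) ^ n + (k : ℤ) * (∏ j, (ps j : ℤ)) * r + a + d i)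
          (∏ j, (ps j : ℤ)) ∧
        ∀ f ∈ F, IsCoprime (f.eval (r : ℤ)) (∏ j, (ps j : ℤ)) :=
  large_primes_progressions_general F hF P hP hPprime n hn l d
end

section
/- Let Q be a finite set of primes, p a natural number not divisible by any q ∈ Q, and for each q ∈ Q fix c_q ∈ {1,...,q−1}. Let (d₁,...,d_l) be a strictly increasing sequence of positive integers such that for every prime q the classes 0, d₁,...,d_l do not cover ℤ/qℤ, let a ∈ ℤ and n > 1. Then there exist infinitely many k ∈ ℕ such that for every q ∈ Q and every i ∈ {0,1,...,l} (with d₀ = 0), q does not divide c_q^n + k·p·c_q + a + dᵢ. -/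
/-!
Everything is periodic modulo each `q ∈ Q`. Since `p * c q` is a unit mod `q`, the residue
of `k` can be chosen so that `c q ^ n + k * p * c q + a ≡ -e_q`, where `e_q` is a class
missed by all `d i`; then `q` divides none of the shifted values. The Chinese remainder
theorem combines these residues into one class modulo `∏ q`, which contains infinitely many `k`.
-/

theorem exists_forall_add_mul_add_ne_zero {K ι : Type*} [Field K] {u : K} (hu : u ≠ 0)
    (b : K) (d : ι → K) {e : K} (he : ∀ i, e ≠ d i) :
    ∃ x : K, ∀ i, b + x * u + d i ≠ 0 := by
  refine ⟨(-e - b) / u, fun i h => he i ?_⟩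
  rw [div_mul_cancel₀ _ hu] at h
  linear_combination -h

theorem Set.infinite_setOf_forall_of_forall_modEq {ι : Type*} (S : Finset ι) {m : ι → ℕ}
    (hm : ∀ i ∈ S, m i ≠ 0) (hcop : Set.Pairwise S (Function.onFun Nat.Coprime m))
    (P : ι → ℕ → Prop)
    (hP : ∀ i ∈ S, ∃ r, ∀ k, k ≡ r [MOD m i] → P i k) :
    {k | ∀ i ∈ S, P i k}.Infinite := by
  choose! r hr using hP
  obtain ⟨k₀, hk₀⟩ := Nat.chineseRemainderOfFinset r m S hm hcop
  have hM : 0 < ∏ i ∈ S, m i := Finset.prod_pos fun i hi => Nat.pos_of_ne_zero (hm i hi)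
  refine Set.infinite_of_injective_forall_mem (f := fun t => k₀ + t * ∏ i ∈ S, m i)
    (fun t₁ t₂ h => Nat.eq_of_mul_eq_mul_right hM (Nat.add_left_cancel h)) fun t i hi => ?_
  have hperiod : t * ∏ j ∈ S, m j ≡ 0 [MOD m i] :=
    Nat.modEq_zero_iff_dvd.2 ((Finset.dvd_prod_of_mem m hi).mul_left t)
  exact hr i hi _ ((add_zero k₀ ▸ hperiod.add_left k₀).trans (hk₀ i hi))

theorem exists_residue_forall_not_dvd {q : ℕ} (hq : q.Prime) {p c : ℕ} (hp : ¬ q ∣ p)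
    (hc : ¬ q ∣ c) (a : ℤ) (n : ℕ) {ι : Type*} (d : ι → ℕ)
    (hadm : ∃ e : ZMod q, ∀ i, e ≠ (d i : ZMod q)) :
    ∃ r, ∀ k, k ≡ r [MOD q] → ∀ i, ¬ (q : ℤ) ∣ (c : ℤ) ^ n + (k : ℤ) * p * c + a + d i := by
  have : Fact q.Prime := ⟨hq⟩
  obtain ⟨e, he⟩ := hadm
  have hpc : (p : ZMod q) * c ≠ 0 :=
    mul_ne_zero (by rwa [Ne, ZMod.natCast_eq_zero_iff]) (by rwa [Ne, ZMod.natCast_eq_zero_iff])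
  obtain ⟨x, hx⟩ :=
    exists_forall_add_mul_add_ne_zero hpc ((c : ZMod q) ^ n + a) (fun i => (d i : ZMod q)) he
  refine ⟨x.val, fun k hk i hdvd => hx i ?_⟩
  have hkx : (k : ZMod q) = x := by
    rw [(ZMod.natCast_eq_natCast_iff _ _ _).2 hk, ZMod.natCast_zmod_val]
  rw [← ZMod.intCast_zmod_eq_zero_iff_dvd] at hdvd
  push_cast [hkx] at hdvd
  linear_combination hdvd

theorem many_good_k_general (Q : Finset ℕ) (hQ : ∀ q ∈ Q, q.Prime)
    (p : ℕ) (hp : ∀ q ∈ Q, ¬ q ∣ p)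
    (c : ℕ → ℕ) (hc : ∀ q ∈ Q, 1 ≤ c q ∧ c q ≤ q - 1)
    (l : ℕ) (d : Fin (l + 1) → ℕ)
    (hadm : ∀ q : ℕ, q.Prime → ∃ e : ZMod q, ∀ i, e ≠ (d i : ZMod q))
    (a : ℤ) (n : ℕ) :
    {k : ℕ | ∀ q ∈ Q, ∀ i : Fin (l + 1),
      ¬ (q : ℤ) ∣ (c q : ℤ) ^ n + (k : ℤ) * p * (c q) + a + d i}.Infinite := by
  refine Set.infinite_setOf_forall_of_forall_modEq Q (m := id)
    (fun q hq => (hQ q hq).ne_zero)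
    (fun q hq q' hq' hne => (Nat.coprime_primes (hQ q hq) (hQ q' hq')).2 hne) _ fun q hq => ?_
  have hcq : ¬ q ∣ c q :=
    Nat.not_dvd_of_pos_of_lt (hc q hq).1 (Nat.lt_of_le_pred (hQ q hq).pos (hc q hq).2)
  exact exists_residue_forall_not_dvd (hQ q hq) (hp q hq) hcq a n d (hadm q (hQ q hq))

theorem many_good_k (Q : Finset ℕ) (hQ : ∀ q ∈ Q, q.Prime)
    (p : ℕ) (hp : ∀ q ∈ Q, ¬ q ∣ p)
    (c : ℕ → ℕ) (hc : ∀ q ∈ Q, 1 ≤ c q ∧ c q ≤ q - 1)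
    (l : ℕ) (d : Fin (l + 1) → ℕ) (hd0 : d 0 = 0) (hmono : StrictMono d)
    (hadm : ∀ q : ℕ, q.Prime → ∃ e : ZMod q, ∀ i, e ≠ (d i : ZMod q))
    (a : ℤ) (n : ℕ) (hn : 1 < n) :
    {k : ℕ | ∀ q ∈ Q, ∀ i : Fin (l + 1),
      ¬ (q : ℤ) ∣ (c q : ℤ) ^ n + (k : ℤ) * p * (c q) + a + d i}.Infinite :=
  many_good_k_general Q hQ p hp c hc l d hadm a n
end

section
/- Let r ∈ ℕ, n > 1, and 0 = d₀ < d₁ < ... < d_l with r^n > d_l. Let p₀,...,p_l be pairwise distinct primes each greater than r^n + d_l, and let a ∈ ℕ satisfy a ≡ pᵢ − dᵢ (mod pᵢ²) for each i. Then for every non-negative integer k and all i, j ∈ {0,...,l}, the prime p_j does not divide r^n + k·p·r + a + dᵢ, where p = p₀⋯p_l. -/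
/-!
The prime `p_j` divides `k p r` and, by the congruence on `a`, also `a + d_j`. So a divisor `p_j`
of `r^n + k p r + a + d_i` would divide `r^n + d_i - d_j`, which lies strictly between `0` and `p_j`.
-/

open Fin.NatCast

theorem Int.dvd_add_of_modEq_sub {p m a c : ℤ} (hm : p ∣ m) (h : a ≡ p - c [ZMOD m]) :
    p ∣ a + c := by
  have hp : p ∣ p - c - a := (h.of_dvd hm).dvd
  rw [show a + c = p - (p - c - a) by ring]
  exact dvd_sub dvd_rfl hp

theorem Int.not_dvd_add_of_pos_of_lt {p x y : ℤ} (hy : p ∣ y) (hx0 : 0 < x) (hxp : x < p) :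
    ¬ p ∣ x + y := fun h =>
  hx0.ne' (Int.eq_zero_of_dvd_of_nonneg_of_lt hx0.le hxp ((dvd_add_left hy).mp h))

theorem no_small_prime_divisors_general (r : ℕ) (n : ℕ) (l : ℕ)
    (d : Fin (l + 1) → ℕ) (hmono : StrictMono d)
    (hrn : (d l : ℤ) < (r : ℤ) ^ n)
    (ps : Fin (l + 1) → ℕ)
    (hlarge : ∀ i, (r : ℤ) ^ n + d l < ps i)
    (a : ℕ) (ha : ∀ i, (a : ℤ) ≡ (ps i : ℤ) - d i [ZMOD (ps i : ℤ) ^ 2]) :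
    ∀ (k : ℕ) (i j : Fin (l + 1)),
      ¬ (ps j : ℤ) ∣ (r : ℤ) ^ n + (k : ℤ) * (∏ m, (ps m : ℤ)) * r + a + d i := by
  intro k i j hdvd
  have hlast (m : Fin (l + 1)) : (d m : ℤ) ≤ d l := by
    exact_mod_cast hmono.monotone (Fin.natCast_eq_last l ▸ Fin.le_last m)
  have hprod : (ps j : ℤ) ∣ ∏ m, (ps m : ℤ) := Finset.dvd_prod_of_mem _ (Finset.mem_univ j)
  have hrest : (ps j : ℤ) ∣ k * (∏ m, (ps m : ℤ)) * r + (a + d j) :=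
    ((hprod.mul_left _).mul_right _).add
      (Int.dvd_add_of_modEq_sub (dvd_pow_self _ two_ne_zero) (ha j))
  refine Int.not_dvd_add_of_pos_of_lt hrest (x := (r : ℤ) ^ n + d i - d j) ?_ ?_ ?_
  · linarith [hlast j, Int.natCast_nonneg (d i)]
  · linarith [hlast i, hlarge j, Int.natCast_nonneg (d j)]
  · convert hdvd using 1
    ring

theorem no_small_prime_divisors (r : ℕ) (n : ℕ) (hn : 1 < n) (l : ℕ)
    (d : Fin (l + 1) → ℕ) (hd0 : d 0 = 0) (hmono : StrictMono d)
    (hrn : (d l : ℤ) < (r : ℤ) ^ n)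
    (ps : Fin (l + 1) → ℕ) (hps : Function.Injective ps)
    (hprime : ∀ i, (ps i).Prime)
    (hlarge : ∀ i, (r : ℤ) ^ n + d l < ps i)
    (a : ℕ) (ha : ∀ i, (a : ℤ) ≡ (ps i : ℤ) - d i [ZMOD (ps i : ℤ) ^ 2]) :
    ∀ (k : ℕ) (i j : Fin (l + 1)),
      ¬ (ps j : ℤ) ∣ (r : ℤ) ^ n + (k : ℤ) * (∏ m, (ps m : ℤ)) * r + a + d i :=
  no_small_prime_divisors_general r n l d hmono hrn ps hlarge a ha
end

section
/- In the ring R₀ = x·ℚ[x] + ℤ, an element is irreducible if and only if it is ±p for a prime number p, or it is a non-constant polynomial irreducible over ℚ whose constant coefficient is ±1. -/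
open Polynomial

noncomputable def R0 : Subring (Polynomial ℚ) :=
  Subring.comap (Polynomial.evalRingHom (0 : ℚ)) ⊥

/-! The constant term is a ring homomorphism `R0 →+* ℤ`, and `u ∈ R0` is a unit iff it is a unit
of `ℚ[X]` whose constant term is `±1`. An irreducible `g` cannot have constant term `0`, since then
`g = 2 · (g / 2)` with neither factor a unit. A constant `g` is the image of an integer `n`, and its
factorizations in `R0` are those of `n` in `ℤ`. A nonconstant `g` with constant term `n ≠ 0`
factors as `n · (g / n)`, which forces `n = ±1`; and a factorization `g = a b` in `ℚ[X]` becomes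
`(a / a(0)) · (a(0) b)` in `R0`. Conversely, a factorization of such a `g` in `R0` is one in
`ℚ[X]` whose factors have constant terms dividing `±1`. -/

namespace R0

theorem mem_iff {f : ℚ[X]} : f ∈ R0 ↔ ∃ n : ℤ, (n : ℚ) = f.coeff 0 := by
  simp [R0, Subring.mem_bot, coeff_zero_eq_eval_zero]

theorem coe_intCast (n : ℤ) : ((n : R0) : ℚ[X]) = C (n : ℚ) := by
  simp

theorem cast_num_coeff_zero (f : R0) : (((f : ℚ[X]).coeff 0).num : ℚ) = (f : ℚ[X]).coeff 0 := by
  obtain ⟨n, hn⟩ := mem_iff.mp f.2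
  simp [← hn]

noncomputable def constTerm : R0 →+* ℤ where
  toFun f := ((f : ℚ[X]).coeff 0).num
  map_one' := by simp
  map_mul' f g := Int.cast_injective (α := ℚ) <| by
    rw [Int.cast_mul, cast_num_coeff_zero, cast_num_coeff_zero, cast_num_coeff_zero]
    exact mul_coeff_zero _ _
  map_zero' := by simp
  map_add' f g := Int.cast_injective (α := ℚ) <| by
    rw [Int.cast_add, cast_num_coeff_zero, cast_num_coeff_zero, cast_num_coeff_zero]
    exact coeff_add _ _ _

theorem cast_constTerm (f : R0) : (constTerm f : ℚ) = (f : ℚ[X]).coeff 0 :=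
  cast_num_coeff_zero f

theorem eq_intCast_constTerm {f : R0} (hf : (f : ℚ[X]).natDegree = 0) :
    f = (constTerm f : R0) := by
  ext1
  rw [coe_intCast, cast_constTerm, ← eq_C_of_natDegree_eq_zero hf]

theorem isUnit_iff {u : R0} : IsUnit u ↔ IsUnit (u : ℚ[X]) ∧ IsUnit (constTerm u) := by
  refine ⟨fun hu => ⟨hu.map R0.subtype, hu.map constTerm⟩, fun ⟨hu, hc⟩ => ?_⟩
  rw [eq_intCast_constTerm (natDegree_eq_zero_of_isUnit hu)]
  exact hc.map (Int.castRingHom R0)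

instance : IsLocalHom (Int.castRingHom R0) :=
  isLocalHom_of_leftInverse constTerm fun n => by simp

theorem constTerm_ne_zero_of_irreducible {g : R0} (hg : Irreducible g) : constTerm g ≠ 0 := by
  intro hg0
  have hcoeff : (g : ℚ[X]).coeff 0 = 0 := by rw [← cast_constTerm, hg0, Int.cast_zero]
  let half : R0 := ⟨C (1 / 2 : ℚ) * g, mem_iff.mpr ⟨0, by simp [hcoeff]⟩⟩
  have hg2 : g = 2 * half := Subtype.ext <| by
    show (g : ℚ[X]) = 2 * (C (1 / 2 : ℚ) * g)
    rw [← mul_assoc, ← C_ofNat, ← C_mul]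
    norm_num
  have hhalf : constTerm half = 0 := Int.cast_injective (α := ℚ) <| by
    rw [cast_constTerm]
    simp [half, hcoeff]
  rcases hg.isUnit_or_isUnit hg2 with hu | hu <;> have := hu.map constTerm
  · rw [map_ofNat, Int.isUnit_iff] at this
    omega
  · rw [hhalf] at this
    exact not_isUnit_zero this

theorem irreducible_intCast_iff (n : ℤ) : Irreducible (n : R0) ↔ Irreducible n := by
  refine ⟨fun h => .of_map (f := Int.castRingHom R0) h, fun hn => ⟨?_, fun a b hab => ?_⟩⟩
  · exact (isUnit_map_iff (Int.castRingHom R0) n).not.mpr hn.not_isUnit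
  have hab' : C (n : ℚ) = (a : ℚ[X]) * b := by rw [← coe_intCast, hab]; rfl
  obtain ⟨ha, hb⟩ := mul_ne_zero_iff.mp (hab' ▸ C_ne_zero.mpr (Int.cast_ne_zero.mpr hn.ne_zero))
  have hdeg : (a : ℚ[X]).natDegree + (b : ℚ[X]).natDegree = 0 := by
    rw [← natDegree_mul ha hb, ← hab', natDegree_C]
  rw [eq_intCast_constTerm (f := a) (by omega), eq_intCast_constTerm (f := b) (by omega)]
  simp only [← eq_intCast (Int.castRingHom R0), isUnit_map_iff]
  exact hn.isUnit_or_isUnit (by simpa using congrArg constTerm hab)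

theorem irreducible_coe_of_irreducible {g : R0} (hg : Irreducible g)
    (hdeg : 0 < (g : ℚ[X]).natDegree) : Irreducible (g : ℚ[X]) := by
  refine ⟨not_isUnit_of_natDegree_pos _ hdeg, fun a b hab => ?_⟩
  have ha0 : a.coeff 0 ≠ 0 := fun h => constTerm_ne_zero_of_irreducible hg <|
    Int.cast_injective (α := ℚ) <| by rw [cast_constTerm, hab, mul_coeff_zero, h]; simp
  have ha' : C (a.coeff 0)⁻¹ * a ∈ R0 := mem_iff.mpr ⟨1, by simp [ha0]⟩
  have hb' : C (a.coeff 0) * b ∈ R0 :=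
    mem_iff.mpr ⟨constTerm g, by rw [cast_constTerm, hab]; simp [mul_coeff_zero]⟩
  have hg' : g = ⟨_, ha'⟩ * ⟨_, hb'⟩ := Subtype.ext <| by
    show (g : ℚ[X]) = C (a.coeff 0)⁻¹ * a * (C (a.coeff 0) * b)
    rw [hab, mul_mul_mul_comm, ← C_mul, inv_mul_cancel₀ ha0, C_1, one_mul]
  refine (hg.isUnit_or_isUnit hg').imp (fun hu => ?_) (fun hu => ?_)
  · exact isUnit_of_mul_isUnit_right (isUnit_iff.mp hu).1
  · exact isUnit_of_mul_isUnit_right (isUnit_iff.mp hu).1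

theorem isUnit_constTerm_of_irreducible {g : R0} (hg : Irreducible g)
    (hdeg : 0 < (g : ℚ[X]).natDegree) : IsUnit (constTerm g) := by
  have hn0 : (constTerm g : ℚ) ≠ 0 := Int.cast_ne_zero.mpr (constTerm_ne_zero_of_irreducible hg)
  have hm : C (constTerm g : ℚ)⁻¹ * (g : ℚ[X]) ∈ R0 :=
    mem_iff.mpr ⟨1, by
      rw [mul_coeff_zero, coeff_C_zero, ← cast_constTerm, inv_mul_cancel₀ hn0, Int.cast_one]⟩
  have hg' : g = (constTerm g : R0) * ⟨_, hm⟩ := Subtype.ext <| by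
    show (g : ℚ[X]) = ((constTerm g : R0) : ℚ[X]) * (C (constTerm g : ℚ)⁻¹ * g)
    rw [coe_intCast, ← mul_assoc, ← C_mul, mul_inv_cancel₀ hn0, C_1, one_mul]
  refine (hg.isUnit_or_isUnit hg').elim (fun hu => ?_) (fun hu => absurd hdeg ?_)
  · rwa [← eq_intCast (Int.castRingHom R0), isUnit_map_iff] at hu
  · have := natDegree_eq_zero_of_isUnit (isUnit_iff.mp hu).1
    rw [natDegree_C_mul (inv_ne_zero hn0)] at this
    omega

theorem irreducible_of_irreducible_coe {g : R0} (hg : Irreducible (g : ℚ[X]))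
    (hc : IsUnit (constTerm g)) : Irreducible g := by
  refine ⟨fun hu => hg.not_isUnit (hu.map R0.subtype), fun a b hab => ?_⟩
  rw [hab, map_mul, IsUnit.mul_iff] at hc
  exact (hg.isUnit_or_isUnit (congrArg Subtype.val hab)).imp
    (fun ha => isUnit_iff.mpr ⟨ha, hc.1⟩) (fun hb => isUnit_iff.mpr ⟨hb, hc.2⟩)

theorem isUnit_constTerm_iff (g : R0) :
    IsUnit (constTerm g) ↔ (g : ℚ[X]).coeff 0 = 1 ∨ (g : ℚ[X]).coeff 0 = -1 := by
  rw [Int.isUnit_iff, ← cast_constTerm]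
  norm_cast

end R0

theorem Polynomial.exists_natPrime_eq_C_or_eq_neg_C_iff {R : Type*} [Ring R] (f : R[X]) :
    (∃ p : ℕ, p.Prime ∧ (f = C (p : R) ∨ f = -C (p : R))) ↔ ∃ n : ℤ, Prime n ∧ f = C (n : R) := by
  constructor
  · rintro ⟨p, hp, rfl | rfl⟩
    · exact ⟨p, Nat.prime_iff_prime_int.mp hp, by simp⟩
    · exact ⟨-p, (Nat.prime_iff_prime_int.mp hp).neg, by simp⟩
  · rintro ⟨n, hn, rfl⟩
    refine ⟨n.natAbs, Int.prime_iff_natAbs_prime.mp hn, ?_⟩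
    rcases Int.natAbs_eq n with h | h
    · exact .inl (by rw [h]; simp)
    · exact .inr (by rw [h]; simp)

theorem R0_irreducible_characterization (g : R0) :
    Irreducible g ↔
      (∃ p : ℕ, p.Prime ∧ ((g : Polynomial ℚ) = C (p : ℚ) ∨ (g : Polynomial ℚ) = -C (p : ℚ))) ∨
      (0 < (g : Polynomial ℚ).natDegree ∧ Irreducible (g : Polynomial ℚ) ∧
        ((g : Polynomial ℚ).coeff 0 = 1 ∨ (g : Polynomial ℚ).coeff 0 = -1)) := by
  rw [exists_natPrime_eq_C_or_eq_neg_C_iff, ← R0.isUnit_constTerm_iff]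
  constructor
  · intro hg
    by_cases hdeg : (g : ℚ[X]).natDegree = 0
    · rw [R0.eq_intCast_constTerm hdeg, R0.irreducible_intCast_iff] at hg
      exact .inl ⟨_, hg.prime, by rw [← R0.coe_intCast, ← R0.eq_intCast_constTerm hdeg]⟩
    · have hpos := Nat.pos_of_ne_zero hdeg
      exact .inr ⟨hpos, R0.irreducible_coe_of_irreducible hg hpos,
        R0.isUnit_constTerm_of_irreducible hg hpos⟩
  · rintro (⟨n, hn, hgn⟩ | ⟨-, hirr, hunit⟩)
    · rw [show g = (n : R0) from Subtype.ext (by rw [hgn, R0.coe_intCast]),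
        R0.irreducible_intCast_iff]
      exact hn.irreducible
    · exact R0.irreducible_of_irreducible_coe hirr hunit
end

section
/- With R_τ = {f ∈ ℚ[x] : ∀ p prime, f(τ_p) ∈ ℤ_p}, a natural number m is a prime element of R_τ if and only if m is a prime number. -/
/-!
Evaluation at `τ p` is a ring map `R_τ → ℤ_[p]`, and `p` divides `f` in `R_τ` exactly when it
divides the value `f (τ p)` in `ℤ_[p]`: the quotient `f / p` still satisfies the `q`-adic
conditions for `q ≠ p`, where `p` is a unit. So `p` is prime in `R_τ` because it is prime in
`ℤ_[p]`. Conversely, `R_τ ∩ ℚ = ℤ` makes divisibility between natural numbers the same in `R_τ`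
as in `ℕ`, so a natural number that is prime in `R_τ` is prime in `ℕ`.
-/

open Polynomial

noncomputable def Rtau (τ : (p : ℕ) → [Fact p.Prime] → ℤ_[p]) : Subring (Polynomial ℚ) :=
  ⨅ (p : ℕ) (hp : Fact p.Prime),
    Subring.comap (Polynomial.aeval ((τ p : ℤ_[p]) : ℚ_[p]) : Polynomial ℚ →ₐ[ℚ] ℚ_[p]).toRingHom
      (PadicInt.Coe.ringHom (p := p)).range

theorem Prime.of_map {R S F : Type*} [CommMonoidWithZero R] [CommMonoidWithZero S] [FunLike F R S]
    [MonoidWithZeroHomClass F R S] (f : F) {x : R} (hx : Prime (f x))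
    (hdvd : ∀ y, f x ∣ f y → x ∣ y) : Prime x :=
  ⟨fun h ↦ hx.ne_zero (h ▸ map_zero f), fun hu ↦ hx.not_isUnit (hu.map f),
    fun a b hab ↦ (hx.dvd_or_dvd (by simpa using map_dvd f hab)).imp (hdvd a) (hdvd b)⟩

theorem Padic.norm_ratCast_le_one_iff {p : ℕ} [Fact p.Prime] {q : ℚ} :
    ‖(q : ℚ_[p])‖ ≤ 1 ↔ ¬p ∣ q.den := by
  rw [norm_rat_le_one_iff_padicValuation_le_one, Rat.padicValuation_le_one_iff]

theorem Rat.den_eq_one_of_forall_padic_norm_le_one {q : ℚ}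
    (h : ∀ (p : ℕ) [Fact p.Prime], ‖(q : ℚ_[p])‖ ≤ 1) : q.den = 1 := by
  by_contra hq
  obtain ⟨p, hp, hpq⟩ := Nat.exists_prime_and_dvd hq
  have : Fact p.Prime := ⟨hp⟩
  exact Padic.norm_ratCast_le_one_iff.mp (h p) hpq

namespace Rtau

variable (τ : (p : ℕ) → [Fact p.Prime] → ℤ_[p])

theorem mem_iff {f : ℚ[X]} :
    f ∈ Rtau τ ↔ ∀ (p : ℕ) [Fact p.Prime], ‖aeval (τ p : ℚ_[p]) f‖ ≤ 1 := by
  simp only [Rtau, Subring.mem_iInf, Subring.mem_comap, RingHom.mem_range]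
  refine forall_congr' fun p ↦ forall_congr' fun _ ↦ ⟨?_, fun h ↦ ⟨⟨_, h⟩, rfl⟩⟩
  rintro ⟨z, hz⟩
  exact hz ▸ z.norm_le_one

theorem C_mem_iff {q : ℚ} : C q ∈ Rtau τ ↔ q.den = 1 := by
  refine ⟨fun h ↦ Rat.den_eq_one_of_forall_padic_norm_le_one fun p _ ↦ ?_, fun h ↦ ?_⟩
  · simpa using (mem_iff τ).mp h p
  · rw [← (Rat.den_eq_one_iff q).mp h, C_eq_intCast]
    exact intCast_mem _ _

theorem natCast_dvd_natCast_iff {m k : ℕ} : (m : Rtau τ) ∣ k ↔ m ∣ k := by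
  refine ⟨fun ⟨c, hc⟩ ↦ ?_, Nat.cast_dvd_cast⟩
  rcases eq_or_ne m 0 with rfl | hm
  · simpa using hc
  have hm' : (m : ℚ) ≠ 0 := Nat.cast_ne_zero.mpr hm
  have hc' : (c : ℚ[X]) = C ((k : ℚ) / m) := by
    refine mul_left_cancel₀ (C_ne_zero.mpr hm') ?_
    rw [← C_mul, mul_div_cancel₀ _ hm']
    simpa using (congrArg Subtype.val hc).symm
  rw [← Rat.den_div_natCast_eq_one_iff k m hm, ← C_mem_iff τ, ← hc']
  exact c.2

noncomputable def evalHom (p : ℕ) [Fact p.Prime] : Rtau τ →+* ℤ_[p] where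
  toFun f := ⟨aeval (τ p : ℚ_[p]) (f : ℚ[X]), (mem_iff τ).mp f.2 p⟩
  map_one' := Subtype.ext (map_one _)
  map_mul' _ _ := Subtype.ext (map_mul _ _ _)
  map_zero' := Subtype.ext (map_zero _)
  map_add' _ _ := Subtype.ext (map_add _ _ _)

theorem coe_evalHom (p : ℕ) [Fact p.Prime] (f : Rtau τ) :
    (evalHom τ p f : ℚ_[p]) = aeval (τ p : ℚ_[p]) (f : ℚ[X]) := rfl

theorem natCast_dvd_iff_dvd_evalHom (p : ℕ) [hp : Fact p.Prime] (f : Rtau τ) :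
    (p : Rtau τ) ∣ f ↔ (p : ℤ_[p]) ∣ evalHom τ p f := by
  refine ⟨fun h ↦ by simpa using map_dvd (evalHom τ p) h, fun ⟨y, hy⟩ ↦ ?_⟩
  have hfy : aeval (τ p : ℚ_[p]) (f : ℚ[X]) = p * y := by
    simpa [coe_evalHom] using congrArg ((↑) : ℤ_[p] → ℚ_[p]) hy
  have hdiv : C (p⁻¹ : ℚ) * f ∈ Rtau τ := by
    refine (mem_iff τ).mpr fun q _ ↦ ?_
    rw [map_mul, aeval_C, norm_mul, eq_ratCast, Rat.cast_inv, Rat.cast_natCast, norm_inv]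
    by_cases hqp : q = p
    · subst hqp
      rw [hfy, norm_mul, Padic.norm_p, inv_inv, ← mul_assoc,
        mul_inv_cancel₀ (by exact_mod_cast hp.out.ne_zero), one_mul]
      exact y.norm_le_one
    · have hcop : q.Coprime p := (Nat.coprime_primes Fact.out hp.out).mpr hqp
      rw [Padic.norm_natCast_eq_one_iff.mpr hcop, inv_one, one_mul]
      exact (mem_iff τ).mp f.2 q
  refine ⟨⟨_, hdiv⟩, Subtype.ext ?_⟩
  rw [Subring.coe_mul, Subring.coe_natCast, ← C_eq_natCast, ← mul_assoc, ← C_mul,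
    mul_inv_cancel₀ (by exact_mod_cast hp.out.ne_zero), C_1, one_mul]

theorem prime_natCast (p : ℕ) [Fact p.Prime] : Prime (p : Rtau τ) :=
  Prime.of_map (evalHom τ p) (by simpa using PadicInt.prime_p)
    fun f h ↦ (natCast_dvd_iff_dvd_evalHom τ p f).mpr (by simpa using h)

end Rtau

theorem natCast_prime_in_Rtau_iff (τ : (p : ℕ) → [Fact p.Prime] → ℤ_[p]) (m : ℕ) :
    Prime ((m : Rtau τ)) ↔ m.Prime := by
  refine ⟨fun hm ↦ Nat.prime_iff.mpr ?_, fun hm ↦ ?_⟩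
  · exact Prime.of_map (Nat.castRingHom (Rtau τ)) hm
      fun k hk ↦ (Rtau.natCast_dvd_natCast_iff τ).mp hk
  · have : Fact m.Prime := ⟨hm⟩
    exact Rtau.prime_natCast τ m
end

section
/- Let f, g ∈ ℤ[x] be non-constant, irreducible over ℤ, with positive leading coefficients, and f ≠ g. If f and g have no common root in ℂ, then there exist infinitely many primes q such that f has a root c in ℤ/qℤ with g(c) ≠ 0 in ℤ/qℤ. -/
open Polynomial

lemma primes_with_root_infinite (f : Polynomial ℤ) (hdeg : 0 < f.natDegree) :
    {q : ℕ | q.Prime ∧ ∃ c : ZMod q, Polynomial.aeval c f = 0}.Infinite := by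
  have hf0 : f ≠ 0 := fun h => by simp [h] at hdeg
  by_cases ha0 : f.coeff 0 = 0
  · refine Nat.infinite_setOf_prime.mono ?_
    intro q hq
    refine ⟨hq, 0, ?_⟩
    have : (Polynomial.aeval (0 : ZMod q)) f = algebraMap ℤ (ZMod q) (f.coeff 0) := by
      simp [Polynomial.aeval_def, Polynomial.eval₂_eq_eval_map, ← Polynomial.coeff_zero_eq_eval_zero]
    rw [this, ha0, map_zero]
  · apply Set.infinite_of_forall_exists_gt
    intro n
    set a := f.coeff 0 with ha
    set k : ℤ := ((n + 1).factorial : ℤ) with hk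
    have hkpos : 0 < k := by positivity
    -- choose t with |f.eval (a^2 * k * t)| > |a|
    have hfin : {t : ℤ | |f.eval (a^2 * k * t)| ≤ |a|}.Finite := by
      have : {t : ℤ | |f.eval (a^2 * k * t)| ≤ |a|} ⊆
          ⋃ y ∈ Finset.Icc (-|a|) |a|, {t : ℤ | f.eval (a^2 * k * t) = y} := by
        intro t ht
        simp only [Set.mem_iUnion, Finset.mem_Icc]
        exact ⟨f.eval (a^2 * k * t), ⟨neg_le_of_abs_le ht, le_of_abs_le ht⟩, rfl⟩
      refine Set.Finite.subset (Set.Finite.biUnion (Finset.finite_toSet _) ?_) this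
      intro y _
      have hfy : f - C y ≠ 0 := by
        intro h
        have hfC : f = C y := sub_eq_zero.mp h
        rw [hfC] at hdeg; simp at hdeg
      have hroots := Polynomial.finite_setOf_isRoot hfy
      have hinj : Function.Injective (fun t : ℤ => a^2 * k * t) := by
        intro s t hst
        have haa : a^2 * k ≠ 0 := by positivity
        exact mul_left_cancel₀ haa hst
      have : {t : ℤ | f.eval (a^2 * k * t) = y} ⊆ (fun t : ℤ => a^2 * k * t) ⁻¹' {x | (f - C y).IsRoot x} := by
        intro t ht
        simp only [Set.mem_setOf_eq] at ht
        simp [Polynomial.IsRoot, Polynomial.eval_sub, ht, sub_eq_zero]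
      exact Set.Finite.subset (Set.Finite.preimage hinj.injOn hroots) this
    obtain ⟨t, ht⟩ := hfin.infinite_compl.nonempty
    simp only [Set.mem_compl_iff, Set.mem_setOf_eq, not_le] at ht
    set M : ℤ := a^2 * k * t with hM
    -- M ∣ f.eval M - a
    have hdvd : M ∣ f.eval M - a := by
      have h2 := Polynomial.sub_dvd_eval_sub M 0 f
      have h0 : f.eval 0 = a := (Polynomial.coeff_zero_eq_eval_zero f).symm
      simpa [h0] using h2
    obtain ⟨s, hs⟩ := hdvd
    set v : ℤ := 1 + a * k * t * s with hv
    have hFv : f.eval M = a * v := by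
      have h1 : f.eval M = a + M * s := by linarith
      rw [h1, hM, hv]; ring
    have hvabs : 1 < |v| := by
      rw [hFv, abs_mul] at ht
      have hapos : 0 < |a| := abs_pos.mpr ha0
      nlinarith
    have hvne1 : v.natAbs ≠ 1 := by
      intro h
      have : |v| = 1 := by rw [Int.abs_eq_natAbs, h]; rfl
      omega
    obtain ⟨p, hp, hpv⟩ := Int.exists_prime_and_dvd hvne1
    set q : ℕ := p.natAbs with hq
    have hqprime : q.Prime := Int.prime_iff_natAbs_prime.mp hp
    have hqv : (q : ℤ) ∣ v := (Int.natAbs_dvd).mpr hpv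
    have hqn : n < q := by
      by_contra hle
      push_neg at hle
      have hq1 : q ∣ (n + 1).factorial := Nat.dvd_factorial hqprime.pos (by omega)
      have hq1' : (q : ℤ) ∣ v - 1 := by
        have : (q : ℤ) ∣ k := Int.natCast_dvd_natCast.mpr hq1
        exact Dvd.dvd.trans this ⟨a * t * s, by rw [hv]; ring⟩
      have : (q : ℤ) ∣ 1 := (Dvd.dvd.sub hqv hq1').trans (by norm_num)
      have := Int.le_of_dvd one_pos this
      have := hqprime.two_le
      omega
    refine ⟨q, ⟨hqprime, ?_⟩, hqn⟩
    haveI : NeZero q := ⟨hqprime.pos.ne'⟩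
    refine ⟨((M : ℤ) : ZMod q), ?_⟩
    have heval : (Polynomial.aeval ((M : ℤ) : ZMod q)) f = ((f.eval M : ℤ) : ZMod q) := by
      have := Polynomial.aeval_algebraMap_apply (ZMod q) M f
      simpa using this
    rw [heval]
    rw [ZMod.intCast_zmod_eq_zero_iff_dvd]
    rw [hFv]
    exact hqv.mul_left a

theorem infinitely_many_primes_root_of_f_not_g (f g : Polynomial ℤ)
    (hfdeg : 0 < f.natDegree) (hgdeg : 0 < g.natDegree)
    (hfirr : Irreducible f) (hgirr : Irreducible g)
    (hflc : 0 < f.leadingCoeff) (hglc : 0 < g.leadingCoeff)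
    (hne : f ≠ g)
    (hnoroot : ¬ ∃ z : ℂ, Polynomial.aeval z f = 0 ∧ Polynomial.aeval z g = 0) :
    {q : ℕ | q.Prime ∧ ∃ c : ZMod q,
      Polynomial.aeval c f = 0 ∧ Polynomial.aeval c g ≠ 0}.Infinite := by
  have helper := primes_with_root_infinite f hfdeg
  classical
  have hf0 : f ≠ 0 := fun h => by simp [h] at hfdeg
  have hg0 : g ≠ 0 := fun h => by simp [h] at hgdeg
  set fQ : Polynomial ℚ := f.map (algebraMap ℤ ℚ) with hfQ
  set gQ : Polynomial ℚ := g.map (algebraMap ℤ ℚ) with hgQ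
  have hinj : Function.Injective (algebraMap ℤ ℚ) := fun a b h => by exact_mod_cast h
  have hfQ0 : fQ ≠ 0 := (Polynomial.map_ne_zero_iff hinj).mpr hf0
  -- coprimality over ℚ
  have hcop : IsCoprime fQ gQ := by
    rw [← EuclideanDomain.gcd_isUnit_iff]
    by_contra hu
    set d := EuclideanDomain.gcd fQ gQ with hd
    have hd0 : d ≠ 0 := by
      intro h
      exact hfQ0 (EuclideanDomain.gcd_eq_zero_iff.mp h).1
    have hdpos : 0 < d.degree := Polynomial.degree_pos_of_ne_zero_of_nonunit hd0 hu
    have hdC : 0 < (d.map (algebraMap ℚ ℂ)).degree := by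
      rwa [Polynomial.degree_map]
    obtain ⟨z, hz⟩ := Complex.exists_root hdC
    have hzd : Polynomial.aeval z d = 0 := by
      rwa [Polynomial.aeval_def, Polynomial.eval₂_eq_eval_map]
    refine hnoroot ⟨z, ?_, ?_⟩
    · obtain ⟨e, he⟩ := EuclideanDomain.gcd_dvd_left fQ gQ
      have : Polynomial.aeval z fQ = 0 := by rw [he, map_mul, hzd, zero_mul]
      rwa [hfQ, Polynomial.aeval_map_algebraMap] at this
    · obtain ⟨e, he⟩ := EuclideanDomain.gcd_dvd_right fQ gQ
      have : Polynomial.aeval z gQ = 0 := by rw [he, map_mul, hzd, zero_mul]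
      rwa [hgQ, Polynomial.aeval_map_algebraMap] at this
  obtain ⟨u, v, huv⟩ := hcop
  -- clear denominators
  obtain ⟨bu, hbu⟩ := IsLocalization.integerNormalization_map_to_map (nonZeroDivisors ℤ) u
  obtain ⟨bv, hbv⟩ := IsLocalization.integerNormalization_map_to_map (nonZeroDivisors ℤ) v
  set U := IsLocalization.integerNormalization (nonZeroDivisors ℤ) u with hU
  set V := IsLocalization.integerNormalization (nonZeroDivisors ℤ) v with hV
  have hbu0 : (bu : ℤ) ≠ 0 := nonZeroDivisors.coe_ne_zero bu
  have hbv0 : (bv : ℤ) ≠ 0 := nonZeroDivisors.coe_ne_zero bv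
  set N : ℤ := (bu : ℤ) * (bv : ℤ) with hN
  have hN0 : N ≠ 0 := mul_ne_zero hbu0 hbv0
  have hkey : (C (bv : ℤ) * U) * f + (C (bu : ℤ) * V) * g = C N := by
    apply Polynomial.map_injective (algebraMap ℤ ℚ) hinj
    rw [Polynomial.map_add, Polynomial.map_mul, Polynomial.map_mul, Polynomial.map_mul,
      Polynomial.map_mul, Polynomial.map_C, Polynomial.map_C, Polynomial.map_C, hbu, hbv]
    have hsmul : ∀ (n : ℤ) (p : Polynomial ℚ), n • p = C ((n : ℚ)) * p := by
      intro n p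
      rw [zsmul_eq_mul]
      norm_cast
    rw [hsmul, hsmul]
    simp only [eq_intCast, hN, Int.cast_mul, Polynomial.C_mul]
    linear_combination (C ((bu : ℤ) : ℚ) * C ((bv : ℤ) : ℚ)) * huv
  have hDfin : {q : ℕ | (q : ℤ) ∣ N}.Finite := by
    apply Set.Finite.subset (Set.finite_Iic N.natAbs)
    intro q hq
    have hq' : q ∣ N.natAbs := by
      have := Int.natAbs_dvd_natAbs.mpr hq
      simpa using this
    exact Nat.le_of_dvd (Int.natAbs_pos.mpr hN0) hq'
  refine ((helper.diff hDfin).mono ?_)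
  rintro q ⟨⟨hqp, c, hc⟩, hqN⟩
  simp only [Set.mem_setOf_eq, not_not] at hqN
  haveI : NeZero q := ⟨hqp.pos.ne'⟩
  refine ⟨hqp, c, hc, ?_⟩
  intro hgc
  apply hqN
  have hzero := congrArg (Polynomial.aeval c) hkey
  simp only [map_add, map_mul, hc, hgc, mul_zero, add_zero, zero_add, Polynomial.aeval_C,
    algebraMap_int_eq, eq_intCast] at hzero
  have hNc : ((N : ℤ) : ZMod q) = 0 := by simpa using hzero.symm
  exact (ZMod.intCast_zmod_eq_zero_iff_dvd N q).mp hNc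
end

section
/- Let f ∈ ℤ[x] be non-constant with no rational root and let g ∈ ℤ[x] be coprime to f in ℚ[x]. Then the set of primes p such that f has a root modulo p which is not a root of g modulo p is infinite. -/
open Polynomial

theorem infinitely_many_primes_root_avoiding (f g : Polynomial ℤ)
    (hfdeg : 0 < f.natDegree) (hfnoroot : ¬ ∃ q : ℚ, Polynomial.aeval q f = 0)
    (hcop : IsCoprime (f.map (Int.castRingHom ℚ)) (g.map (Int.castRingHom ℚ))) :
    {p : ℕ | p.Prime ∧ ∃ c : ZMod p,
      Polynomial.aeval c f = 0 ∧ Polynomial.aeval c g ≠ 0}.Infinite := by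
  classical
  obtain ⟨a, b, hab⟩ := hcop
  obtain ⟨da, hda⟩ := IsLocalization.integerNormalization_map_to_map (nonZeroDivisors ℤ) a
  obtain ⟨db, hdb⟩ := IsLocalization.integerNormalization_map_to_map (nonZeroDivisors ℤ) b
  set A := IsLocalization.integerNormalization (nonZeroDivisors ℤ) a with hA
  set B := IsLocalization.integerNormalization (nonZeroDivisors ℤ) b with hB
  set n : ℤ := (da : ℤ) * db with hn_def
  have hn : n ≠ 0 := mul_ne_zero (nonZeroDivisors.coe_ne_zero da) (nonZeroDivisors.coe_ne_zero db)
  have halg : (Int.castRingHom ℚ) = algebraMap ℤ ℚ := (algebraMap_int_eq ℚ).symm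
  have key : (C ((db : ℤ))) * A * f + (C ((da : ℤ))) * B * g = C n := by
    apply Polynomial.map_injective (Int.castRingHom ℚ) Int.cast_injective
    rw [Polynomial.map_add, Polynomial.map_mul, Polynomial.map_mul, Polynomial.map_mul,
      Polynomial.map_mul, Polynomial.map_C, Polynomial.map_C, Polynomial.map_C, halg, hda, hdb]
    rw [zsmul_eq_mul, zsmul_eq_mul]
    rw [show (((da : ℤ) : ℚ[X])) = C ((da : ℤ) : ℚ) by simp [C_eq_intCast],
      show (((db : ℤ) : ℚ[X])) = C ((db : ℤ) : ℚ) by simp [C_eq_intCast]]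
    rw [← halg]
    simp only [Int.coe_castRingHom, hn_def, Int.cast_mul, map_mul]
    linear_combination (C ((da : ℤ) : ℚ) * C ((db : ℤ) : ℚ)) * hab
  set c : ℤ := f.coeff 0 with hc_def
  have hc : c ≠ 0 := by
    intro h
    exact hfnoroot ⟨0, by simp [aeval_def, eval₂_at_zero, ← hc_def, h]⟩
  by_contra hfin
  have hSfin : {p : ℕ | p.Prime ∧ ∃ c : ZMod p,
      Polynomial.aeval c f = 0 ∧ Polynomial.aeval c g ≠ 0}.Finite := Set.not_infinite.mp hfin
  set K : ℤ := n * ∏ p ∈ hSfin.toFinset, (p : ℤ) with hK_def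
  have hK : K ≠ 0 := by
    refine mul_ne_zero hn (Finset.prod_ne_zero_iff.mpr fun p hp => ?_)
    have := (hSfin.mem_toFinset.mp hp).1.pos
    positivity
  set h : ℤ[X] := f.divX with hh_def
  have hh : h ≠ 0 := by
    intro h0
    have := Polynomial.divX_eq_zero_iff.mp h0
    rw [this] at hfdeg
    simp at hfdeg
  -- the auxiliary polynomial v with f.eval (c*K*t) = c * (v.eval t + 1)
  set w : ℤ[X] := h.comp (C (c * K) * X) with hw_def
  have hw : w ≠ 0 := by
    intro h0
    have h1 : natDegree (C (c * K) * X) = 1 := natDegree_C_mul_X _ (mul_ne_zero hc hK)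
    have := Polynomial.leadingCoeff_comp (p := h) (q := C (c * K) * X) (by rw [h1]; norm_num)
    rw [← hw_def, h0] at this
    simp [h1, leadingCoeff_eq_zero] at this
    rcases this with h2 | ⟨h2 | h2, _⟩
    exacts [hh h2, hc h2, hK h2]
  set v : ℤ[X] := C K * X * w with hv_def
  have hv : v ≠ 0 := mul_ne_zero (mul_ne_zero (by simpa [C_eq_zero] using hK) X_ne_zero) hw
  have hvdeg : 0 < v.natDegree := by
    rw [hv_def, natDegree_mul (mul_ne_zero (by simpa [C_eq_zero] using hK) X_ne_zero) hw,
      natDegree_C_mul_X _ hK]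
    omega
  have hQ : (v * (v + C (1 : ℤ)) * (v + C (2 : ℤ))) ≠ 0 := by
    refine mul_ne_zero (mul_ne_zero hv ?_) ?_ <;>
    · intro h0
      have := congrArg natDegree h0
      rw [natDegree_add_C, natDegree_zero] at this
      omega
  obtain ⟨t, ht⟩ : ∃ t : ℤ, (v * (v + C (1 : ℤ)) * (v + C (2 : ℤ))).eval t ≠ 0 := by
    have := (Polynomial.finite_setOf_isRoot hQ).infinite_compl
    obtain ⟨t, ht⟩ := this.nonempty
    exact ⟨t, ht⟩
  set m : ℤ := v.eval t + 1 with hm_def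
  have hm2 : 2 ≤ m.natAbs := by
    simp only [eval_mul, eval_add, eval_C, mul_ne_zero_iff] at ht
    rcases ht with ⟨⟨h1, h2⟩, h3⟩
    rw [hm_def]
    omega
  set p : ℕ := m.natAbs.minFac with hp_def
  have hp : p.Prime := Nat.minFac_prime (by omega)
  have hpm : (p : ℤ) ∣ m := by
    have := Nat.minFac_dvd m.natAbs
    exact Int.dvd_natAbs.mp (Int.natCast_dvd_natCast.mpr this)
  have hveval : v.eval t = K * t * h.eval (c * K * t) := by
    simp [hv_def, hw_def, eval_comp, mul_comm, mul_assoc, mul_left_comm]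
  have hfeval : f.eval (c * K * t) = c * m := by
    conv_lhs => rw [← Polynomial.divX_mul_X_add f]
    rw [eval_add, eval_mul, eval_C, ← hh_def, ← hc_def, hm_def, hveval, eval_X]
    ring
  have hpK : ¬ ((p : ℤ) ∣ K) := by
    intro hdvd
    have h1 : (p : ℤ) ∣ v.eval t := by
      rw [hveval]; exact Dvd.dvd.mul_right (Dvd.dvd.mul_right hdvd t) _
    have h2 : (p : ℤ) ∣ 1 := by
      have := dvd_sub hpm h1
      simpa [hm_def] using this
    have := Int.le_of_dvd one_pos h2
    have := hp.two_le
    omega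
  haveI : Fact p.Prime := ⟨hp⟩
  set r : ZMod p := ((c * K * t : ℤ) : ZMod p) with hr
  have hmz : ((m : ℤ) : ZMod p) = 0 := (ZMod.intCast_zmod_eq_zero_iff_dvd m p).mpr hpm
  have hfr : aeval r f = 0 := by
    have h1 : aeval r f = ((f.eval (c * K * t) : ℤ) : ZMod p) := by
      rw [hr, aeval_def, ← eval_map, algebraMap_int_eq, eval_intCast_map, eq_intCast]
      norm_cast
    rw [h1, hfeval]
    push_cast
    rw [hmz, mul_zero]
  have hgr : aeval r g ≠ 0 := by
    intro h0
    have hkey := congrArg (aeval r) key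
    simp only [map_add, map_mul, hfr, h0, mul_zero, add_zero, aeval_C,
      algebraMap_int_eq, eq_intCast, zero_add, map_intCast] at hkey
    have hnz : ((n : ℤ) : ZMod p) = 0 := by first | exact hkey.symm | exact hkey
    have hd : (p : ℤ) ∣ n := (ZMod.intCast_zmod_eq_zero_iff_dvd n p).mp hnz
    refine hpK (hd.trans ?_)
    rw [hK_def]
    exact dvd_mul_right _ _
  have hpS : p ∈ hSfin.toFinset := hSfin.mem_toFinset.mpr ⟨hp, r, hfr, hgr⟩
  have : (p : ℤ) ∣ K := by
    have h1 : (p : ℤ) ∣ ∏ q ∈ hSfin.toFinset, (q : ℤ) :=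
      Finset.dvd_prod_of_mem (fun q : ℕ => (q : ℤ)) hpS
    exact h1.trans (dvd_mul_left _ _)
  exact hpK this
end
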